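/- Let K be an infinite field of characteristic different from 2, G an abelian group, t ∈ G an element of order 2, q = ⌈(n−1)/2⌉, and η = (g_1,…,g_q), η' = (g_1',…,g_q') ∈ G^q. Assume that either (a) there is an i with 1 ≤ i ≤ ⌊(n−1)/2⌋ such that g_i ≢ g_i' (mod ⟨t⟩), or (b) n is even and g_q ≠ g_q'. Then the MT gradings (UJ_n, t, η) and (UJ_n, t, η') are not graded-isomorphic. -/

import Mathlib

open Matrix

/-- The submodule of upper triangular `n × n` matrices over `K`. -/
def UTs (K : Type*) [Field K] (n : ℕ) : Submodule K (Matrix (Fin n) (Fin n) K) where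
  carrier := {M | ∀ i j : Fin n, (j : ℕ) < (i : ℕ) → M i j = 0}
  add_mem' := by
    intro a b ha hb i j h
    simp [ha i j h, hb i j h]
  zero_mem' := by
    intro i j h
    simp
  smul_mem' := by
    intro c a ha i j h
    simp [ha i j h]

/-- `UJ K n` : the underlying space of the Jordan algebra of upper triangular matrices. -/
abbrev UJ (K : Type*) [Field K] (n : ℕ) : Type _ := ↥(UTs K n)

theorem mem_UTs {K : Type*} [Field K] {n : ℕ} {a : Matrix (Fin n) (Fin n) K} :
    a ∈ UTs K n ↔ ∀ i j : Fin n, (j : ℕ) < (i : ℕ) → a i j = 0 := Iff.rfl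

theorem UTs_mul_mem {K : Type*} [Field K] {n : ℕ} {a b : Matrix (Fin n) (Fin n) K}
    (ha : a ∈ UTs K n) (hb : b ∈ UTs K n) : a * b ∈ UTs K n := by
  rw [mem_UTs] at ha hb ⊢
  intro i j h
  rw [Matrix.mul_apply]
  apply Finset.sum_eq_zero
  intro k _
  rcases lt_or_ge (k : ℕ) (i : ℕ) with hk | hk
  · rw [ha i k hk, zero_mul]
  · rw [hb k j (lt_of_lt_of_le h hk), mul_zero]

/-- The Jordan product `x ∘ y = xy + yx` on upper triangular matrices. -/
def jmul {K : Type*} [Field K] {n : ℕ} (x y : UJ K n) : UJ K n :=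
  ⟨x.1 * y.1 + y.1 * x.1, (UTs K n).add_mem (UTs_mul_mem x.2 y.2) (UTs_mul_mem y.2 x.2)⟩

/-- The matrix unit `e_{ij}` (with `i ≤ j`) as an element of `UJ K n`. -/
def Eu (K : Type*) [Field K] {n : ℕ} (i j : Fin n) (h : i ≤ j) : UJ K n :=
  ⟨Matrix.single i j 1, by
    rw [mem_UTs]
    intro a b hab
    by_cases h1 : i = a ∧ j = b
    · exfalso
      rcases h1 with ⟨rfl, rfl⟩
      exact absurd hab (not_lt.mpr h)
    · simp only [Matrix.single, Matrix.of_apply, if_neg h1]⟩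

/-- `Y⁺_{i:m} = e_{i:m} + e_{−i:m}` (`0`-based index `i`, `i + m < n`). -/
def Yp (K : Type*) [Field K] {n : ℕ} (i m : ℕ) (h : i + m < n) : UJ K n :=
  Eu K ⟨i, by omega⟩ ⟨i + m, h⟩ (Fin.mk_le_mk.mpr (by omega)) +
  Eu K ⟨n - 1 - i - m, by omega⟩ ⟨n - 1 - i, by omega⟩ (Fin.mk_le_mk.mpr (by omega))

/-- `Y⁻_{i:m} = e_{i:m} − e_{−i:m}` (`0`-based index `i`, `i + m < n`). -/
def Ym (K : Type*) [Field K] {n : ℕ} (i m : ℕ) (h : i + m < n) : UJ K n :=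
  Eu K ⟨i, by omega⟩ ⟨i + m, h⟩ (Fin.mk_le_mk.mpr (by omega)) -
  Eu K ⟨n - 1 - i - m, by omega⟩ ⟨n - 1 - i, by omega⟩ (Fin.mk_le_mk.mpr (by omega))

/-- A `G`-grading on the Jordan algebra `UJ K n`: a direct sum decomposition into
`K`-subspaces `comp g` with `comp g ∘ comp h ⊆ comp (g * h)`. -/
structure UJGrading (K : Type*) [Field K] (n : ℕ) (G : Type*) [Group G] where
  comp : G → Submodule K (UJ K n)
  indep : iSupIndep comp
  sup_top : (⨆ g, comp g) = ⊤
  jmul_mem : ∀ (g h : G) (x y : UJ K n), x ∈ comp g → y ∈ comp h → jmul x y ∈ comp (g * h)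

/-- A graded isomorphism between two families of components: a bijective linear map
preserving the Jordan product and mapping each component onto the corresponding one. -/
def GradedIso {K : Type*} [Field K] {n : ℕ} {G : Type*} [Group G]
    (A A' : G → Submodule K (UJ K n)) : Prop :=
  ∃ ψ : UJ K n ≃ₗ[K] UJ K n,
    (∀ x y, ψ (jmul x y) = jmul (ψ x) (ψ y)) ∧
    ∀ g, (A g).map (ψ : UJ K n →ₗ[K] UJ K n) = A' g

/-- A family of components is elementary if every matrix unit is homogeneous. -/
def IsElementaryFam {K : Type*} [Field K] {n : ℕ} {G : Type*} [Group G]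
    (A : G → Submodule K (UJ K n)) : Prop :=
  ∀ (i j : Fin n) (h : i ≤ j), ∃ g, Eu K i j h ∈ A g

/-- A family of components is of mirror type (MT) if every nonzero `Y⁺_{i:m}`, `Y⁻_{i:m}`
is homogeneous, and their degrees differ whenever both are nonzero. -/
def IsMTFam {K : Type*} [Field K] {n : ℕ} {G : Type*} [Group G]
    (A : G → Submodule K (UJ K n)) : Prop :=
  ∀ (i m : ℕ) (h : i + m < n),
    (Yp K i m h ≠ 0 → ∃ g, Yp K i m h ∈ A g) ∧
    (Ym K i m h ≠ 0 → ∃ g, Ym K i m h ∈ A g) ∧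
    (Yp K i m h ≠ 0 → Ym K i m h ≠ 0 →
      ∀ g g' : G, Yp K i m h ∈ A g → Ym K i m h ∈ A g' → g ≠ g')

/-- The degree of the matrix unit `e_{ij}` in the elementary grading defined by `η`:
`g_i g_{i+1} ⋯ g_{j-1}`. -/
def elemDeg {n : ℕ} (G : Type*) [CommGroup G] (η : Fin (n - 1) → G) (i j : Fin n) : G :=
  ∏ k ∈ (Finset.Ico (i : ℕ) (j : ℕ)).attach,
    η ⟨k.1, by have hk := Finset.mem_Ico.mp k.2; have hj := j.isLt; omega⟩

/-- The components of the elementary grading `(UJ_n, η)`. -/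
def elemComp (K : Type*) [Field K] {n : ℕ} {G : Type*} [CommGroup G]
    (η : Fin (n - 1) → G) (g : G) : Submodule K (UJ K n) :=
  Submodule.span K {x : UJ K n | ∃ (i j : Fin n) (h : i ≤ j), elemDeg G η i j = g ∧ x = Eu K i j h}

/-- The degree of `Y⁺_{i:m}` in the MT grading determined by `η ∈ G^{⌈(n-1)/2⌉}`. -/
def mtDeg {n : ℕ} (G : Type*) [CommGroup G] (η : Fin (n / 2) → G)
    (i m : ℕ) (h : i + m < n) : G :=
  ∏ k ∈ (Finset.range m).attach,
    η ⟨min (i + k.1) (n - 2 - (i + k.1)), by have hk := Finset.mem_range.mp k.2; omega⟩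

/-- The components of the MT grading `(UJ_n, t, η)`:
`deg Y⁺_{i:m}` is `mtDeg η i m` and `deg Y⁻_{i:m} = t ⬝ mtDeg η i m`. -/
def mtComp (K : Type*) [Field K] {n : ℕ} {G : Type*} [CommGroup G]
    (t : G) (η : Fin (n / 2) → G) (g : G) : Submodule K (UJ K n) :=
  Submodule.span K {x : UJ K n |
    (∃ (i m : ℕ) (h : i + m < n), mtDeg G η i m h = g ∧ x = Yp K i m h) ∨
    (∃ (i m : ℕ) (h : i + m < n), t * mtDeg G η i m h = g ∧ x = Ym K i m h)}

/-- The set `𝒯_m` of permutations that strictly decrease to the value `0` and then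
strictly increase. -/
def TT (m : ℕ) : Set (Equiv.Perm (Fin m)) :=
  {σ | ∃ t : Fin m, (σ t : ℕ) = 0 ∧
    (∀ a b : Fin m, a < b → b ≤ t → σ b < σ a) ∧
    (∀ a b : Fin m, t ≤ a → a < b → σ a < σ b)}

/-- The left-normed Jordan product of a list of elements (`0` for the empty list). -/
def jprod {K : Type*} [Field K] {n : ℕ} : List (UJ K n) → UJ K n
  | [] => 0
  | x :: xs => xs.foldl jmul x

/-- The `k`-th left-normed Jordan power `x ∘ x ∘ ⋯ ∘ x` (`k` factors, `0` for `k = 0`). -/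
def jpow {K : Type*} [Field K] {n : ℕ} (x : UJ K n) : ℕ → UJ K n
  | 0 => 0
  | 1 => x
  | (k + 2) => jmul (jpow x (k + 1)) x

/-!
A graded isomorphism is in particular a Jordan automorphism, so it preserves the radical `J`
(the Jordan-nilpotent elements) and its powers `J^{m+1} = span (J^m ∘ J)`; hence each
`dim (A_g ∩ J^m)` is an invariant of the grading. One vector out of each mirror pair
`Y^±_{i:m}` gives a basis adapted both to the grading and to this filtration, so these
dimensions count basis vectors, and the multiset of degrees on every superdiagonal is an
invariant. Reading these multisets from the top superdiagonal down recovers the products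
`g_0 ⋯ g_{j-1}` modulo `⟨t⟩` and their total product `g_0 ⋯ g_{n-2}` exactly. This determines
each `g_i` modulo `⟨t⟩`, and for even `n` the middle `g_q` exactly, since the total product is
`g_q` times a square.
-/

namespace Multiset

theorem apply_zero_eq_of_map_range_eq {α : Type*} {f f' : ℕ → α} {k : ℕ}
    (h : (range (k + 2)).map f = (range (k + 2)).map f')
    (hf : f (k + 1) = f 0) (hf' : f' (k + 1) = f' 0) (hmid : ∀ a, 0 < a → a ≤ k → f a = f' a) :
    f 0 = f' 0 := by
  have hsplit : ∀ g : ℕ → α,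
      (range (k + 2)).map g = {g (k + 1), g 0} + (range k).map fun a => g (1 + a) := fun g => by
    rw [range_succ, show k + 1 = 1 + k by omega, range_add]
    simp [map_map]
  rw [hsplit, hsplit, hf, hf', map_congr rfl fun a ha =>
    hmid (1 + a) (by omega) (by have := mem_range.mp ha; omega)] at h
  have hmem : f 0 ∈ ({f' 0, f' 0} : Multiset α) := add_right_cancel h ▸ by simp
  simpa using hmem

end Multiset

section LinearAlgebra

open Submodule

variable {R M ι : Type*}

theorem mem_span_image_inter_of_pairwise_dual [CommSemiring R] [AddCommMonoid M] [Module R M]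
    {v : ι → M} {f : ι → Module.Dual R M} (h0 : Pairwise fun i j ↦ f i (v j) = 0)
    (h1 : ∀ i, f i (v i) = 1) {s u : Set ι} {x : M} (hx : x ∈ span R (v '' s))
    (hxu : ∀ i ∉ u, f i x = 0) : x ∈ span R (v '' (s ∩ u)) := by
  obtain ⟨l, hl, rfl⟩ := (Finsupp.mem_span_image_iff_linearCombination R).mp hx
  have hcoeff : ∀ i, f i (Finsupp.linearCombination R v l) = l i := fun i => by
    rw [Finsupp.apply_linearCombination, Finsupp.linearCombination_apply, Finsupp.sum_eq_single i]
    · simp [h1]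
    · intro j _ hji
      simp [h0 hji.symm]
    · simp
  refine (Finsupp.mem_span_image_iff_linearCombination R).mpr ⟨l, fun i hi => ⟨hl hi, ?_⟩, rfl⟩
  by_contra hu
  exact Finsupp.mem_support_iff.mp hi (hcoeff i ▸ hxu i hu)

theorem LinearIndependent.finrank_span_image_finset [Ring R] [StrongRankCondition R] [Nontrivial R]
    [AddCommGroup M] [Module R M] {v : ι → M} (hv : LinearIndependent R v) (s : Finset ι) :
    Module.finrank R (span R (v '' s)) = s.card := by
  rw [Set.image_eq_range]
  exact (finrank_span_eq_card (hv.comp _ Subtype.val_injective)).trans (Fintype.card_coe s)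

end LinearAlgebra

theorem eq_or_eq_mul_of_mk_zpowers_eq {G : Type*} [Group G] {t : G} (ht : orderOf t = 2) {a b : G}
    (h : (a : G ⧸ Subgroup.zpowers t) = b) : b = a ∨ b = a * t := by
  obtain ⟨k, hk⟩ := Subgroup.mem_zpowers_iff.mp (QuotientGroup.eq.mp h)
  rw [← zpow_mod_orderOf, ht, Nat.cast_ofNat] at hk
  rcases Int.emod_two_eq_zero_or_one k with hk2 | hk2
  · rw [hk2, zpow_zero, eq_comm, inv_mul_eq_one] at hk
    exact Or.inl hk.symm
  · rw [hk2, zpow_one, eq_comm, inv_mul_eq_iff_eq_mul] at hk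
    exact Or.inr hk

namespace Matrix

variable {R : Type*} [Semiring R] {n : ℕ}

theorem mul_apply_eq_zero_of_lt {a b : Matrix (Fin n) (Fin n) R} {p q : ℕ}
    (ha : ∀ i j : Fin n, (j : ℕ) < i + p → a i j = 0)
    (hb : ∀ i j : Fin n, (j : ℕ) < i + q → b i j = 0)
    (i j : Fin n) (hij : (j : ℕ) < i + (p + q)) : (a * b) i j = 0 := by
  rw [mul_apply]
  refine Finset.sum_eq_zero fun k _ => ?_
  rcases lt_or_ge (k : ℕ) (i + p) with hk | hk
  · rw [ha i k hk, zero_mul]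
  · rw [hb k j (by omega), mul_zero]

theorem pow_apply_eq_zero_of_lt {a : Matrix (Fin n) (Fin n) R} {p : ℕ}
    (ha : ∀ i j : Fin n, (j : ℕ) < i + p → a i j = 0) :
    ∀ k, ∀ i j : Fin n, (j : ℕ) < i + k * p → (a ^ k) i j = 0
  | 0, i, j, hij => by simp [Fin.ne_of_val_ne (show (i : ℕ) ≠ j by omega)]
  | k + 1, i, j, hij => by
    rw [pow_succ]
    exact mul_apply_eq_zero_of_lt (pow_apply_eq_zero_of_lt ha k) ha i j
      (by rw [add_mul, one_mul] at hij; exact hij)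

end Matrix

namespace UJ

open Finset Submodule

variable {K : Type*} [Field K] {n : ℕ}

theorem coe_jmul (x y : UJ K n) : (jmul x y).1 = x.1 * y.1 + y.1 * x.1 := rfl

theorem Eu_apply (i j : Fin n) (h : i ≤ j) (a b : Fin n) :
    (Eu K i j h).1 a b = if i = a ∧ j = b then 1 else 0 := rfl

theorem coe_jpow_succ (x : UJ K n) (k : ℕ) : (jpow x (k + 1)).1 = (2 : K) ^ k • x.1 ^ (k + 1) := by
  induction k with
  | zero => simp [jpow]
  | succ k ih =>
    change (jmul (jpow x (k + 1)) x).1 = _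
    rw [coe_jmul, ih, smul_mul_assoc, mul_smul_comm, ← pow_succ, ← pow_succ', ← two_smul K,
      smul_smul, ← pow_succ']

theorem map_jpow (ψ : UJ K n ≃ₗ[K] UJ K n) (hψ : ∀ x y, ψ (jmul x y) = jmul (ψ x) (ψ y))
    (x : UJ K n) : ∀ k, ψ (jpow x k) = jpow (ψ x) k
  | 0 => map_zero ψ
  | 1 => rfl
  | k + 2 => by rw [jpow, hψ, map_jpow ψ hψ x (k + 1)]; rfl

theorem symm_map_jmul (ψ : UJ K n ≃ₗ[K] UJ K n) (hψ : ∀ x y, ψ (jmul x y) = jmul (ψ x) (ψ y))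
    (x y : UJ K n) : ψ.symm (jmul x y) = jmul (ψ.symm x) (ψ.symm y) :=
  ψ.injective (by simp [hψ])

def radicalPow (K : Type*) [Field K] (n m : ℕ) : Submodule K (UJ K n) where
  carrier := {x | ∀ i j : Fin n, (j : ℕ) < i + m → x.1 i j = 0}
  add_mem' ha hb i j h := by simp [ha i j h, hb i j h]
  zero_mem' _ _ _ := rfl
  smul_mem' c _ ha i j h := by simp [ha i j h]

theorem jmul_mem_radicalPow {p q : ℕ} {x y : UJ K n} (hx : x ∈ radicalPow K n p)
    (hy : y ∈ radicalPow K n q) : jmul x y ∈ radicalPow K n (p + q) := fun i j hij => by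
  rw [coe_jmul, Matrix.add_apply, Matrix.mul_apply_eq_zero_of_lt hx hy i j hij,
    Matrix.mul_apply_eq_zero_of_lt hy hx i j (by omega), add_zero]

theorem pow_apply_self (x : UJ K n) (k : ℕ) (i : Fin n) : (x.1 ^ k) i i = x.1 i i ^ k := by
  induction k with
  | zero => simp
  | succ k ih =>
    rw [pow_succ, Matrix.mul_apply, Finset.sum_eq_single i, ih, pow_succ]
    · intro b _ hb
      rcases lt_or_gt_of_ne (Fin.val_ne_of_ne hb) with hbi | hbi
      · rw [Matrix.pow_apply_eq_zero_of_lt (p := 0) x.2 k i b (by omega), zero_mul]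
      · rw [x.2 b i hbi, mul_zero]
    · simp

theorem radicalPow_zero : radicalPow K n 0 = ⊤ :=
  eq_top_iff.mpr fun x _ i j hij => x.2 i j hij

theorem mem_radicalPow_one_iff (h2 : (2 : K) ≠ 0) (x : UJ K n) :
    x ∈ radicalPow K n 1 ↔ jpow x n = 0 := by
  rcases n with _ | k
  · exact iff_of_true (fun i => i.elim0) rfl
  rw [← Subtype.coe_inj, coe_jpow_succ, ZeroMemClass.coe_zero, smul_eq_zero,
    or_iff_right (pow_ne_zero k h2)]
  constructor
  · intro hx
    ext i j
    exact Matrix.pow_apply_eq_zero_of_lt hx (k + 1) i j (by omega)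
  · intro hx i j hij
    rcases lt_or_eq_of_le (Nat.lt_succ_iff.mp hij) with hji | hji
    · exact x.2 i j hji
    · obtain rfl : j = i := Fin.ext hji
      simpa [pow_apply_self] using congrFun (congrFun hx j) j

theorem map_radicalPow_one_le (h2 : (2 : K) ≠ 0) (ψ : UJ K n ≃ₗ[K] UJ K n)
    (hψ : ∀ x y, ψ (jmul x y) = jmul (ψ x) (ψ y)) :
    (radicalPow K n 1).map (ψ : UJ K n →ₗ[K] UJ K n) ≤ radicalPow K n 1 := by
  rintro _ ⟨x, hx, rfl⟩
  rw [SetLike.mem_coe, mem_radicalPow_one_iff h2] at hx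
  rw [LinearEquiv.coe_coe, mem_radicalPow_one_iff h2, ← map_jpow ψ hψ, hx, map_zero]

theorem Eu_jmul_Eu {i k j : Fin n} (hik : i ≤ k) (hkj : k ≤ j) (hij : i ≠ j) :
    jmul (Eu K i k hik) (Eu K k j hkj) = Eu K i j (hik.trans hkj) := by
  ext : 1
  rw [coe_jmul]
  change Matrix.single i k 1 * Matrix.single k j 1 + Matrix.single k j 1 * Matrix.single i k 1
    = Matrix.single i j 1
  rw [Matrix.single_mul_single_same, Matrix.single_mul_single_of_ne _ _ _ _ hij.symm, one_mul,
    add_zero]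

theorem mem_of_forall_Eu_mem {p : Submodule K (UJ K n)} {x : UJ K n}
    (hx : ∀ i j (h : i ≤ j), x.1 i j ≠ 0 → Eu K i j h ∈ p) : x ∈ p := by
  have hsum : x = ∑ i, ∑ j, if h : i ≤ j then x.1 i j • Eu K i j h else 0 := by
    ext : 1
    simp only [Submodule.coe_sum]
    conv_lhs => rw [Matrix.matrix_eq_sum_single x.1]
    refine Finset.sum_congr rfl fun i _ => Finset.sum_congr rfl fun j _ => ?_
    split_ifs with h
    · change Matrix.single i j (x.1 i j) = x.1 i j • Matrix.single i j 1
      rw [Matrix.smul_single, smul_eq_mul, mul_one]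
    · rw [x.2 i j (by simpa using h), Matrix.single_zero]; rfl
  rw [hsum]
  refine sum_mem fun i _ => sum_mem fun j _ => ?_
  split_ifs with h
  · by_cases hij : x.1 i j = 0
    · rw [hij, zero_smul]; exact zero_mem p
    · exact p.smul_mem _ (hx i j h hij)
  · exact zero_mem p

theorem radicalPow_succ (m : ℕ) : radicalPow K n (m + 1) =
    span K {z | ∃ x ∈ radicalPow K n m, ∃ y ∈ radicalPow K n 1, z = jmul x y} := by
  refine le_antisymm (fun x hx => mem_of_forall_Eu_mem fun i j hij hne => ?_) ?_
  · have hm : (i : ℕ) + m + 1 ≤ j := by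
      by_contra hc
      exact hne (hx i j (by omega))
    let k : Fin n := ⟨j - 1, by omega⟩
    refine subset_span ⟨Eu K i k (Fin.mk_le_mk.mpr (by omega)), fun a b hab => ?_,
      Eu K k j (Fin.mk_le_mk.mpr (by omega)), fun a b hab => ?_,
      (Eu_jmul_Eu _ _ (Fin.ne_of_val_ne (by omega))).symm⟩
    all_goals
      rw [Eu_apply, if_neg]
      rintro ⟨rfl, rfl⟩
      simp only [k] at hab
      omega
  · rw [span_le]
    rintro _ ⟨x, hx, y, hy, rfl⟩
    exact jmul_mem_radicalPow hx hy

theorem map_radicalPow_le (h2 : (2 : K) ≠ 0) (m : ℕ) (ψ : UJ K n ≃ₗ[K] UJ K n)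
    (hψ : ∀ x y, ψ (jmul x y) = jmul (ψ x) (ψ y)) :
    (radicalPow K n m).map (ψ : UJ K n →ₗ[K] UJ K n) ≤ radicalPow K n m := by
  induction m with
  | zero => rw [radicalPow_zero]; exact le_top
  | succ m ih =>
    rw [radicalPow_succ, map_span_le]
    rintro _ ⟨x, hx, y, hy, rfl⟩
    rw [LinearEquiv.coe_coe, hψ]
    exact subset_span ⟨ψ x, ih ⟨x, hx, rfl⟩, ψ y, map_radicalPow_one_le h2 ψ hψ ⟨y, hy, rfl⟩, rfl⟩

theorem map_radicalPow (h2 : (2 : K) ≠ 0) (m : ℕ) (ψ : UJ K n ≃ₗ[K] UJ K n)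
    (hψ : ∀ x y, ψ (jmul x y) = jmul (ψ x) (ψ y)) :
    (radicalPow K n m).map (ψ : UJ K n →ₗ[K] UJ K n) = radicalPow K n m := by
  refine le_antisymm (map_radicalPow_le h2 m ψ hψ) fun x hx => ⟨ψ.symm x, ?_, by simp⟩
  exact map_radicalPow_le h2 m ψ.symm (symm_map_jmul ψ hψ) ⟨x, hx, rfl⟩

theorem Yp_apply (a m : ℕ) (h : a + m < n) (i j : Fin n) :
    (Yp K a m h).1 i j = (if a = i ∧ a + m = j then 1 else 0) +
      if n - 1 - a - m = i ∧ n - 1 - a = j then 1 else 0 := by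
  simp [Yp, Eu_apply, Fin.ext_iff]

theorem Ym_apply (a m : ℕ) (h : a + m < n) (i j : Fin n) :
    (Ym K a m h).1 i j = (if a = i ∧ a + m = j then 1 else 0) -
      if n - 1 - a - m = i ∧ n - 1 - a = j then 1 else 0 := by
  simp [Ym, Eu_apply, Fin.ext_iff]

/-- A cell `(a, m)` stands for the position `(a, a + m)` on the `m`-th superdiagonal; its mirror
is `(n - 1 - a - m, m)`. -/
abbrev Cell (n : ℕ) := {c : ℕ × ℕ // c.1 + c.2 < n}

instance : Fintype (Cell n) :=
  Fintype.subtype ((range n ×ˢ range n).filter fun c => c.1 + c.2 < n) (by simp; omega)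

/-- `+1` on cells weakly above the antidiagonal, `-1` below it. -/
def cellSign (K : Type*) [Field K] (n a m : ℕ) : K := if 2 * a + m + 1 ≤ n then 1 else -1

def mtVec (K : Type*) [Field K] (c : Cell n) : UJ K n :=
  if 2 * c.1.1 + c.1.2 + 1 ≤ n then Yp K c.1.1 c.1.2 c.2 else Ym K c.1.1 c.1.2 c.2

theorem mtVec_apply (c : Cell n) (i j : Fin n) :
    (mtVec K c).1 i j = (if c.1.1 = i ∧ c.1.1 + c.1.2 = j then 1 else 0) +
      cellSign K n c.1.1 c.1.2 *
        if n - 1 - c.1.1 - c.1.2 = i ∧ n - 1 - c.1.1 = j then 1 else 0 := by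
  by_cases h : 2 * c.1.1 + c.1.2 + 1 ≤ n
  · simp only [mtVec, cellSign, if_pos h, Yp_apply, one_mul]
  · simp only [mtVec, cellSign, if_neg h, Ym_apply]; ring

def entry (K : Type*) [Field K] (i j : Fin n) : UJ K n →ₗ[K] K :=
  Matrix.entryLinearMap K K i j ∘ₗ (UTs K n).subtype

/-- On the antidiagonal the two entries read coincide, whence the factor `4⁻¹`. -/
noncomputable def mtCoord (K : Type*) [Field K] (c : Cell n) : Module.Dual K (UJ K n) :=
  (if 2 * c.1.1 + c.1.2 + 1 = n then (4 : K)⁻¹ else 2⁻¹) •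
    (entry K ⟨c.1.1, by omega⟩ ⟨c.1.1 + c.1.2, c.2⟩ + cellSign K n c.1.1 c.1.2 •
      entry K ⟨n - 1 - c.1.1 - c.1.2, by omega⟩ ⟨n - 1 - c.1.1, by omega⟩)

theorem mtCoord_apply (c : Cell n) (x : UJ K n) : mtCoord K c x =
    (if 2 * c.1.1 + c.1.2 + 1 = n then (4 : K)⁻¹ else 2⁻¹) *
      (x.1 ⟨c.1.1, by omega⟩ ⟨c.1.1 + c.1.2, c.2⟩ + cellSign K n c.1.1 c.1.2 *
        x.1 ⟨n - 1 - c.1.1 - c.1.2, by omega⟩ ⟨n - 1 - c.1.1, by omega⟩) := rfl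

theorem mtCoord_mtVec_self (h2 : (2 : K) ≠ 0) (c : Cell n) : mtCoord K c (mtVec K c) = 1 := by
  obtain ⟨⟨a, m⟩, hc⟩ := c
  have h4 : (4 : K) ≠ 0 := by
    rw [show (4 : K) = 2 * 2 by norm_num]; exact mul_ne_zero h2 h2
  simp only [mtCoord_apply, mtVec_apply, cellSign]
  by_cases hself : 2 * a + m + 1 = n
  · simp (disch := omega) only [if_pos, true_and, ite_true]
    field_simp; norm_num
  · by_cases hup : 2 * a + m + 1 ≤ n
    · simp (disch := omega) only [if_pos, if_neg, hself, and_self, ite_true, ite_false]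
      field_simp; norm_num
    · simp (disch := omega) only [if_neg, hself, hup, and_self, ite_true, ite_false]
      field_simp; norm_num

theorem mtCoord_mtVec_of_ne {d c : Cell n} (hdc : d ≠ c) : mtCoord K d (mtVec K c) = 0 := by
  obtain ⟨⟨b, l⟩, hd⟩ := d
  obtain ⟨⟨a, m⟩, hc⟩ := c
  have hdc' : ¬(b = a ∧ l = m) := by simpa using hdc
  simp only [mtCoord_apply, mtVec_apply, cellSign]
  by_cases hmirror : b = n - 1 - a - m ∧ l = m
  · by_cases hup : 2 * a + m + 1 ≤ n
    · simp (disch := omega) only [if_pos, if_neg]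
      ring
    · simp (disch := omega) only [if_pos, if_neg, hup, ite_false]
      ring
  · simp (disch := omega) only [if_neg]
    ring

theorem linearIndependent_mtVec (h2 : (2 : K) ≠ 0) : LinearIndependent K (mtVec K (n := n)) :=
  .of_pairwise_dual_eq_zero_one _ (mtCoord K) (fun _ _ => mtCoord_mtVec_of_ne)
    (mtCoord_mtVec_self h2)

theorem mtVec_mem_radicalPow {m : ℕ} {c : Cell n} (hc : m ≤ c.1.2) : mtVec K c ∈ radicalPow K n m :=
  fun i j hij => by
    rw [mtVec_apply, if_neg (by omega), if_neg (by omega), mul_zero, add_zero]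

theorem mtCoord_eq_zero_of_mem_radicalPow {m : ℕ} {c : Cell n} (hc : c.1.2 < m) {x : UJ K n}
    (hx : x ∈ radicalPow K n m) : mtCoord K c x = 0 := by
  rw [mtCoord_apply, hx _ _ (by simp; omega), hx _ _ (by simp; omega), mul_zero, add_zero, mul_zero]

section Degrees

variable {G : Type*} [CommGroup G]

/-- The degree `g_{min(j, n-2-j)}` of `e_{j,j+1}` in an MT grading; the `else` branch is only
reached when `n < 2`. -/
def symEta (n : ℕ) (η : Fin (n / 2) → G) (j : ℕ) : G :=
  if h : min j (n - 2 - j) < n / 2 then η ⟨_, h⟩ else 1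

/-- The degree of `Y⁺_{i:m}`. -/
def segDeg (n : ℕ) (η : Fin (n / 2) → G) (i m : ℕ) : G :=
  ∏ k ∈ range m, symEta n η (i + k)

variable (η : Fin (n / 2) → G)

theorem symEta_reflect (j : ℕ) : symEta n η (n - 2 - j) = symEta n η j := by
  simp only [symEta, show min (n - 2 - j) (n - 2 - (n - 2 - j)) = min j (n - 2 - j) by omega]

theorem symEta_of_two_mul_add_two_le {j : ℕ} (hj : 2 * j + 2 ≤ n) :
    symEta n η j = η ⟨j, by omega⟩ := by
  rw [symEta, dif_pos (by omega)]
  exact congrArg η (Fin.ext (by simp; omega))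

theorem mtDeg_eq_segDeg (i m : ℕ) (h : i + m < n) : mtDeg G η i m h = segDeg n η i m := by
  rw [mtDeg, segDeg, ← prod_attach (range m)]
  refine prod_congr rfl fun k _ => ?_
  rw [symEta, dif_pos (by have := mem_range.mp k.2; omega)]

theorem segDeg_add (i m m' : ℕ) :
    segDeg n η i (m + m') = segDeg n η i m * segDeg n η (i + m) m' := by
  simp only [segDeg, prod_range_add, add_assoc]

theorem segDeg_one (i : ℕ) : segDeg n η i 1 = symEta n η i := by
  simp [segDeg]

theorem segDeg_mirror {i m : ℕ} (h : i + m < n) :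
    segDeg n η (n - 1 - i - m) m = segDeg n η i m := by
  rw [segDeg, segDeg, ← prod_range_reflect]
  refine prod_congr rfl fun k hk => ?_
  rw [← symEta_reflect]
  congr 1
  have := mem_range.mp hk
  omega

theorem segDeg_reflect {j : ℕ} (hj : j < n) :
    segDeg n η 0 (n - 1 - j) * segDeg n η 0 j = segDeg n η 0 (n - 1) := by
  have hmirror := segDeg_mirror η (i := 0) (m := j) (by omega)
  rw [Nat.sub_zero] at hmirror
  conv_rhs => rw [show n - 1 = n - 1 - j + j by omega, segDeg_add, zero_add, hmirror]

def cellDeg (n : ℕ) (t : G) (η : Fin (n / 2) → G) (a m : ℕ) : G :=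
  if 2 * a + m + 1 ≤ n then segDeg n η a m else t * segDeg n η a m

end Degrees

section MTComponents

variable {G : Type*} [CommGroup G] (t : G) (η : Fin (n / 2) → G)

theorem Yp_mirror {a m : ℕ} (h : a + m < n) : Yp K a m h = Yp K (n - 1 - a - m) m (by omega) := by
  ext : 1
  ext i j
  simp only [Yp_apply]
  split_ifs <;> first | (exfalso; omega) | ring

theorem Ym_mirror {a m : ℕ} (h : a + m < n) : Ym K a m h = -Ym K (n - 1 - a - m) m (by omega) := by
  ext : 1
  ext i j
  simp only [NegMemClass.coe_neg, Matrix.neg_apply, Ym_apply]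
  split_ifs <;> first | (exfalso; omega) | ring

theorem Ym_eq_zero {a m : ℕ} (h : a + m < n) (ha : 2 * a + m + 1 = n) : Ym K a m h = 0 := by
  ext : 1
  ext i j
  simp only [Ym_apply, ZeroMemClass.coe_zero, Matrix.zero_apply]
  split_ifs <;> first | (exfalso; omega) | ring

theorem mtVec_mem_mtComp (c : Cell n) : mtVec K c ∈ mtComp K t η (cellDeg n t η c.1.1 c.1.2) := by
  unfold mtVec cellDeg
  split_ifs
  · exact subset_span (Or.inl ⟨_, _, c.2, mtDeg_eq_segDeg .., rfl⟩)
  · exact subset_span (Or.inr ⟨_, _, c.2, by rw [mtDeg_eq_segDeg], rfl⟩)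

theorem Yp_mem_span {a m : ℕ} (h : a + m < n) :
    Yp K a m h ∈ span K (mtVec K '' {c | cellDeg n t η c.1.1 c.1.2 = segDeg n η a m}) := by
  by_cases hup : 2 * a + m + 1 ≤ n
  · exact subset_span ⟨⟨(a, m), h⟩, if_pos hup, if_pos hup⟩
  · refine subset_span ⟨⟨(n - 1 - a - m, m), by omega⟩, ?_, ?_⟩
    · change cellDeg n t η (n - 1 - a - m) m = _
      rw [cellDeg, if_pos (by omega), segDeg_mirror η h]
    · rw [Yp_mirror h]
      exact if_pos (by dsimp only; omega)

theorem Ym_mem_span {a m : ℕ} (h : a + m < n) :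
    Ym K a m h ∈ span K (mtVec K '' {c | cellDeg n t η c.1.1 c.1.2 = t * segDeg n η a m}) := by
  rcases lt_trichotomy (2 * a + m + 1) n with hup | hself | hlow
  · rw [Ym_mirror h]
    refine neg_mem (subset_span ⟨⟨(n - 1 - a - m, m), by omega⟩, ?_, if_neg (by dsimp only; omega)⟩)
    change cellDeg n t η (n - 1 - a - m) m = _
    rw [cellDeg, if_neg (by omega), segDeg_mirror η h]
  · rw [Ym_eq_zero h hself]
    exact zero_mem _
  · exact subset_span ⟨⟨(a, m), h⟩, if_neg (by dsimp only; omega), if_neg (by dsimp only; omega)⟩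

theorem mtComp_eq_span (g : G) :
    mtComp K t η g = span K (mtVec K '' {c | cellDeg n t η c.1.1 c.1.2 = g}) := by
  refine le_antisymm (span_le.mpr ?_) (span_le.mpr ?_)
  · rintro _ (⟨a, m, h, rfl, rfl⟩ | ⟨a, m, h, rfl, rfl⟩)
    · rw [mtDeg_eq_segDeg]; exact Yp_mem_span t η h
    · rw [mtDeg_eq_segDeg]; exact Ym_mem_span t η h
  · rintro _ ⟨c, rfl, rfl⟩
    exact mtVec_mem_mtComp t η c

theorem mtComp_inf_radicalPow (h2 : (2 : K) ≠ 0) (g : G) (m : ℕ) :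
    mtComp K t η g ⊓ radicalPow K n m =
      span K (mtVec K '' {c | cellDeg n t η c.1.1 c.1.2 = g ∧ m ≤ c.1.2}) := by
  refine le_antisymm (fun x hx => ?_) (span_le.mpr ?_)
  · obtain ⟨hxA, hxQ⟩ := mem_inf.mp hx
    rw [mtComp_eq_span] at hxA
    exact mem_span_image_inter_of_pairwise_dual (f := mtCoord K) (u := {c | m ≤ c.1.2})
      (fun _ _ => mtCoord_mtVec_of_ne) (mtCoord_mtVec_self h2) hxA
      fun c hc => mtCoord_eq_zero_of_mem_radicalPow (not_le.mp hc) hxQ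
  · rintro _ ⟨c, ⟨rfl, hc⟩, rfl⟩
    exact mem_inf.mpr ⟨mtVec_mem_mtComp t η c, mtVec_mem_radicalPow hc⟩

theorem finrank_mtComp_inf_radicalPow [DecidableEq G] (h2 : (2 : K) ≠ 0) (g : G) (m : ℕ) :
    Module.finrank K ↥(mtComp K t η g ⊓ radicalPow K n m) =
      #{c : Cell n | cellDeg n t η c.1.1 c.1.2 = g ∧ m ≤ c.1.2} := by
  have h := (linearIndependent_mtVec (K := K) (n := n) h2).finrank_span_image_finset
    {c : Cell n | cellDeg n t η c.1.1 c.1.2 = g ∧ m ≤ c.1.2}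
  rwa [coe_filter_univ, ← mtComp_inf_radicalPow t η h2] at h

end MTComponents

section Invariants

variable {G : Type*} [CommGroup G] {t : G} {η η' : Fin (n / 2) → G}

def levelDegs (n : ℕ) (t : G) (η : Fin (n / 2) → G) (m : ℕ) : Multiset G :=
  (Multiset.range (n - m)).map fun a => cellDeg n t η a m

theorem count_levelDegs [DecidableEq G] (g : G) (m : ℕ) :
    (levelDegs n t η m).count g = #{c : Cell n | cellDeg n t η c.1.1 c.1.2 = g ∧ c.1.2 = m} := by
  rw [levelDegs, Multiset.count_map]
  change ((range (n - m)).filter fun a => g = cellDeg n t η a m).card = _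
  symm
  refine card_bij (fun c _ => c.1.1) ?_ ?_ ?_
  · rintro ⟨⟨a, l⟩, h⟩ hc
    simp only [mem_filter, mem_univ, true_and] at hc
    obtain ⟨hdeg, rfl⟩ := hc
    exact mem_filter.mpr ⟨mem_range.mpr (by dsimp only at h ⊢; omega), hdeg.symm⟩
  · rintro ⟨⟨a, l⟩, h⟩ hc ⟨⟨a', l'⟩, h'⟩ hc' (rfl : a = a')
    simp only [mem_filter, mem_univ, true_and] at hc hc'
    simp [hc.2, hc'.2]
  · intro a ha
    obtain ⟨ha, hdeg⟩ := mem_filter.mp ha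
    exact ⟨⟨(a, m), by have := mem_range.mp ha; omega⟩, by simp [hdeg], rfl⟩

theorem card_filter_le_lvl [DecidableEq G] (g : G) (m : ℕ) :
    #{c : Cell n | cellDeg n t η c.1.1 c.1.2 = g ∧ m ≤ c.1.2} =
      (levelDegs n t η m).count g +
        #{c : Cell n | cellDeg n t η c.1.1 c.1.2 = g ∧ m + 1 ≤ c.1.2} := by
  rw [count_levelDegs, ← card_union_of_disjoint (disjoint_filter.mpr fun _ _ h h' => by omega)]
  congr 1
  ext c
  simp only [mem_filter, mem_univ, true_and, mem_union, ← and_or_left]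
  exact and_congr_right fun _ => by omega

theorem levelDegs_eq_of_gradedIso (h2 : (2 : K) ≠ 0)
    (hiso : GradedIso (mtComp K t η) (mtComp K t η')) (m : ℕ) :
    levelDegs n t η m = levelDegs n t η' m := by
  classical
  obtain ⟨ψ, hψ, hψA⟩ := hiso
  have hcard : ∀ g m, #{c : Cell n | cellDeg n t η c.1.1 c.1.2 = g ∧ m ≤ c.1.2} =
      #{c : Cell n | cellDeg n t η' c.1.1 c.1.2 = g ∧ m ≤ c.1.2} := fun g m => by
    have h := LinearEquiv.finrank_map_eq ψ (mtComp K t η g ⊓ radicalPow K n m)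
    rwa [map_inf _ ψ.injective, hψA g, map_radicalPow h2 m ψ hψ,
      finrank_mtComp_inf_radicalPow t η' h2, finrank_mtComp_inf_radicalPow t η h2, eq_comm] at h
  ext g
  have := card_filter_le_lvl (t := t) (η := η) g m
  have := card_filter_le_lvl (t := t) (η := η') g m
  have := hcard g m
  have := hcard g (m + 1)
  omega

theorem map_mk_levelDegs (m : ℕ) :
    (levelDegs n t η m).map ((↑) : G → G ⧸ Subgroup.zpowers t) =
      (Multiset.range (n - m)).map fun a => ((segDeg n η a m : G) : G ⧸ Subgroup.zpowers t) := by
  have hmk : ((t : G) : G ⧸ Subgroup.zpowers t) = 1 :=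
    (QuotientGroup.eq_one_iff t).mpr (Subgroup.mem_zpowers t)
  simp only [levelDegs, Multiset.map_map, Function.comp_def, cellDeg]
  refine Multiset.map_congr rfl fun a _ => ?_
  split_ifs
  · rfl
  · rw [QuotientGroup.mk_mul, hmk, one_mul]

end Invariants

section Reconstruction

variable {G : Type*} [CommGroup G] {t : G} {η η' : Fin (n / 2) → G}

theorem segDeg_eq_inv_mul (η : Fin (n / 2) → G) (a m : ℕ) :
    segDeg n η a m = (segDeg n η 0 a)⁻¹ * segDeg n η 0 (a + m) := by
  rw [eq_inv_mul_iff_mul_eq]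
  simpa using (segDeg_add η 0 a m).symm

theorem segDeg_eq_div (η : Fin (n / 2) → G) {a m : ℕ} (h : a + m < n) :
    segDeg n η a m = segDeg n η 0 (n - 1 - a) * segDeg n η 0 (a + m) / segDeg n η 0 (n - 1) := by
  rw [← segDeg_reflect η (j := a) (by omega), segDeg_eq_inv_mul η a m, mul_div_mul_left_eq_div,
    div_eq_inv_mul]

theorem segDeg_top_eq (hn : 1 ≤ n) (hlev : ∀ m, levelDegs n t η m = levelDegs n t η' m) :
    segDeg n η 0 (n - 1) = segDeg n η' 0 (n - 1) := by
  simpa [levelDegs, Nat.sub_sub_self hn, cellDeg, show 0 < n by omega] using hlev (n - 1)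

/-- On the `j`-th superdiagonal all cells but the two extreme ones have degrees given, modulo
`t`, by longer prefix products, and both extreme ones have degree `g_0 ⋯ g_{j-1}`; cancelling the
former from the invariant multiset leaves two copies of the latter. -/
theorem mk_segDeg_eq (hn : 1 ≤ n) (hlev : ∀ m, levelDegs n t η m = levelDegs n t η' m) :
    ∀ j < n, ((segDeg n η 0 j : G) : G ⧸ Subgroup.zpowers t) = segDeg n η' 0 j := by
  have htop := segDeg_top_eq hn hlev
  refine Nat.strong_decreasing_induction ⟨n, fun j hj hjn => absurd hjn (by omega)⟩
    fun j ih hj => ?_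
  rcases Nat.eq_zero_or_pos j with rfl | hj0
  · simp [segDeg]
  rcases eq_or_lt_of_le (Nat.le_sub_one_of_lt hj) with rfl | hjn
  · rw [htop]
  obtain ⟨k, hk⟩ : ∃ k, n - j = k + 2 := ⟨n - j - 2, by omega⟩
  have hq := congrArg (Multiset.map ((↑) : G → G ⧸ Subgroup.zpowers t)) (hlev j)
  rw [map_mk_levelDegs, map_mk_levelDegs, hk] at hq
  have hends : ∀ ζ : Fin (n / 2) → G, segDeg n ζ (k + 1) j = segDeg n ζ 0 j := fun ζ => by
    rw [← segDeg_mirror ζ (i := 0) (m := j) (by omega)]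
    congr 1
    omega
  refine Multiset.apply_zero_eq_of_map_range_eq hq (by rw [hends]) (by rw [hends])
    fun a ha hak => ?_
  simp only [segDeg_eq_div η (show a + j < n by omega), segDeg_eq_div η' (show a + j < n by omega),
    QuotientGroup.mk_div, QuotientGroup.mk_mul, htop, ih (n - 1 - a) (by omega) (by omega),
    ih (a + j) (by omega) (by omega)]

theorem mk_symEta_eq (hn : 1 ≤ n) (hlev : ∀ m, levelDegs n t η m = levelDegs n t η' m) {j : ℕ}
    (hj : 2 * j + 2 ≤ n) : ((symEta n η j : G) : G ⧸ Subgroup.zpowers t) = symEta n η' j := by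
  rw [← segDeg_one, ← segDeg_one, segDeg_eq_inv_mul η, segDeg_eq_inv_mul η', QuotientGroup.mk_mul,
    QuotientGroup.mk_mul, QuotientGroup.mk_inv, QuotientGroup.mk_inv,
    mk_segDeg_eq hn hlev j (by omega), mk_segDeg_eq hn hlev (j + 1) (by omega)]

theorem symEta_eq_of_eq_two_mul_add_two (ht : orderOf t = 2)
    (hlev : ∀ m, levelDegs n t η m = levelDegs n t η' m) {s : ℕ} (hs : n = 2 * s + 2) :
    symEta n η s = symEta n η' s := by
  have htop : ∀ ζ : Fin (n / 2) → G, segDeg n ζ 0 (n - 1) = segDeg n ζ 0 s ^ 2 * symEta n ζ s :=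
    fun ζ => by
      have hmirror := segDeg_mirror ζ (i := 0) (m := s) (by omega)
      rw [show n - 1 - 0 - s = s + 1 by omega] at hmirror
      rw [show n - 1 = s + 1 + s by omega, segDeg_add, segDeg_add, segDeg_one]
      simp only [zero_add]
      rw [hmirror, sq, mul_right_comm]
  have hsq : segDeg n η 0 s ^ 2 = segDeg n η' 0 s ^ 2 := by
    have ht2 : t ^ 2 = 1 := ht ▸ pow_orderOf_eq_one t
    rcases eq_or_eq_mul_of_mk_zpowers_eq ht (mk_segDeg_eq (by omega) hlev s (by omega)) with h | h
    · rw [h]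
    · rw [h, mul_pow, ht2, mul_one]
  have h := segDeg_top_eq (by omega) hlev
  rwa [htop, htop, hsq, mul_right_inj] at h

end Reconstruction

end UJ

/-- If some `g_i ≢ g_i' (mod ⟨t⟩)` for `i ≤ ⌊(n−1)/2⌋`, or `n` is even and `g_q ≠ g_q'`,
then `(UJ_n, t, η)` and `(UJ_n, t, η')` are not graded-isomorphic. -/
theorem statement_16 {K : Type*} [Field K] (h2 : (2 : K) ≠ 0)
    {n : ℕ} (hn : 2 ≤ n) {G : Type*} [CommGroup G]
    (t : G) (ht : orderOf t = 2) (η η' : Fin (n / 2) → G)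
    (hcond :
      (∃ i : Fin ((n - 1) / 2),
        η ⟨i.1, by have := i.isLt; omega⟩ ≠ η' ⟨i.1, by have := i.isLt; omega⟩ ∧
        η ⟨i.1, by have := i.isLt; omega⟩ ≠ η' ⟨i.1, by have := i.isLt; omega⟩ * t) ∨
      (Even n ∧ η ⟨n / 2 - 1, by omega⟩ ≠ η' ⟨n / 2 - 1, by omega⟩)) :
    ¬ GradedIso (mtComp K t η) (mtComp K t η') := by
  intro hiso
  have hlev := UJ.levelDegs_eq_of_gradedIso h2 hiso
  rcases hcond with ⟨⟨i, hi⟩, hne, hne'⟩ | ⟨⟨r, hr⟩, hne⟩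
  · have h := UJ.mk_symEta_eq (t := t) (by omega) hlev (j := i) (by omega)
    rw [UJ.symEta_of_two_mul_add_two_le η (j := i) (by omega),
      UJ.symEta_of_two_mul_add_two_le η' (j := i) (by omega)] at h
    rcases eq_or_eq_mul_of_mk_zpowers_eq ht h.symm with h | h
    exacts [hne h, hne' h]
  · have h := UJ.symEta_eq_of_eq_two_mul_add_two ht hlev (s := n / 2 - 1) (by omega)
    rw [UJ.symEta_of_two_mul_add_two_le η (j := n / 2 - 1) (by omega),
      UJ.symEta_of_two_mul_add_two_le η' (j := n / 2 - 1) (by omega)] at h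
    exact hne h
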